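/- Let w be smooth on ℝⁿ solving Δw - (1/2)⟨y,∇w⟩ - w/(p-1) + |w|^{p-1}w = 0, and suppose f ∈ C²(ℝⁿ) is positive and satisfies Lf = -μf where Lv = Δv - (1/2)⟨y,∇v⟩ - v/(p-1) + p|w|^{p-1}v. Then for every φ in the weighted W^{1,2} space (i.e. ∫(φ² + |∇φ|²)e^{-|y|²/4} < ∞), ∫ φ² (p|w|^{p-1} + |∇ log f|²) e^{-|y|²/4} dy ≤ ∫ (4|∇φ|² - 2(μ - 1/(p-1)) φ²) e^{-|y|²/4} dy. -/

import Mathlib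

open MeasureTheory Real

noncomputable def pd {n : ℕ} (f : EuclideanSpace ℝ (Fin n) → ℝ) (i : Fin n)
    (y : EuclideanSpace ℝ (Fin n)) : ℝ := fderiv ℝ f y (EuclideanSpace.single i 1)

noncomputable def lap {n : ℕ} (f : EuclideanSpace ℝ (Fin n) → ℝ)
    (y : EuclideanSpace ℝ (Fin n)) : ℝ := ∑ i, pd (pd f i) i y

/-- y · ∇f -/
noncomputable def ygrad {n : ℕ} (f : EuclideanSpace ℝ (Fin n) → ℝ)
    (y : EuclideanSpace ℝ (Fin n)) : ℝ := ∑ i, y i * pd f i y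

/-- ⟨∇f, ∇g⟩ -/
noncomputable def gdot {n : ℕ} (f g : EuclideanSpace ℝ (Fin n) → ℝ)
    (y : EuclideanSpace ℝ (Fin n)) : ℝ := ∑ i, pd f i y * pd g i y

/-- Ornstein–Uhlenbeck operator -/
noncomputable def OU {n : ℕ} (f : EuclideanSpace ℝ (Fin n) → ℝ)
    (y : EuclideanSpace ℝ (Fin n)) : ℝ := lap f y - (1/2) * ygrad f y

/-- linearized operator at w -/
noncomputable def Lop {n : ℕ} (p : ℝ) (w v : EuclideanSpace ℝ (Fin n) → ℝ)
    (y : EuclideanSpace ℝ (Fin n)) : ℝ :=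
  lap v y - (1/2) * ygrad v y - v y / (p-1) + p * |w y| ^ (p-1) * v y

/-- self-similar profile equation -/
def ProfileEq {n : ℕ} (p : ℝ) (w : EuclideanSpace ℝ (Fin n) → ℝ) : Prop :=
  ∀ y, lap w y - (1/2) * ygrad w y - w y / (p-1) + |w y| ^ (p-1) * w y = 0

section Aux
variable {n : ℕ}
local notation "E" => EuclideanSpace ℝ (Fin n)

lemma pd_eq_of_hasFDerivAt {h : E → ℝ} {L : E →L[ℝ] ℝ} {y : E} {i : Fin n}
    (hL : HasFDerivAt h L y) : pd h i y = L (EuclideanSpace.single i 1) := by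
  rw [pd, hL.fderiv]

lemma contDiff_pd_one {h : E → ℝ} (hh : ContDiff ℝ 2 h) (i : Fin n) :
    ContDiff ℝ 1 (pd h i) :=
  (hh.fderiv_right (m := 1) (by norm_num)).clm_apply contDiff_const

lemma continuous_pd {h : E → ℝ} (hh : ContDiff ℝ 1 h) (i : Fin n) :
    Continuous (pd h i) :=
  ((hh.fderiv_right (m := 0) (by norm_num)).clm_apply contDiff_const).continuous

lemma pd_mul {a b : E → ℝ} {y : E} (ha : DifferentiableAt ℝ a y)
    (hb : DifferentiableAt ℝ b y) (i : Fin n) :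
    pd (fun z => a z * b z) i y = pd a i y * b y + a y * pd b i y := by
  rw [show (fun z => a z * b z) = a * b from rfl,
    pd_eq_of_hasFDerivAt (ha.hasFDerivAt.mul hb.hasFDerivAt)]
  simp [pd]; ring

lemma pd_normSq (y : E) (i : Fin n) :
    pd (fun z : E => ‖z‖^2) i y = 2 * y i := by
  rw [pd_eq_of_hasFDerivAt (hasStrictFDerivAt_norm_sq y).hasFDerivAt]
  simp [real_inner_comm, EuclideanSpace.inner_single_left]
  simp [EuclideanSpace.inner_single_right]

lemma norm_sq_eq (y : E) : ‖y‖^2 = ∑ i, (y i)^2 := by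
  rw [EuclideanSpace.norm_eq, Real.sq_sqrt (by positivity)]; simp [Real.norm_eq_abs, sq_abs]

noncomputable def rho {n : ℕ} (y : EuclideanSpace ℝ (Fin n)) : ℝ := Real.exp (-‖y‖^2/4)

lemma contDiff_rho : ContDiff ℝ 2 (rho (n := n)) :=
  (((contDiff_norm_sq ℝ (n := 2)).neg).div_const 4).exp

lemma hasFDerivAt_rho (y : E) :
    HasFDerivAt (rho (n := n)) (rho y • ((-(1/4) : ℝ) • (2 • innerSL ℝ y))) y := by
  have h1 : HasFDerivAt (fun z : E => -‖z‖^2/4) ((-(1/4) : ℝ) • (2 • innerSL ℝ y)) y := by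
    have heq : (fun z : E => -‖z‖^2/4) = (fun z : E => (-(1/4) : ℝ) * ‖z‖^2) := by
      funext z; ring
    rw [heq]
    exact (hasStrictFDerivAt_norm_sq y).hasFDerivAt.const_mul _
  exact h1.exp

lemma pd_rho (y : E) (i : Fin n) : pd (rho (n := n)) i y = -(y i)/2 * rho y := by
  rw [pd_eq_of_hasFDerivAt (hasFDerivAt_rho y)]
  simp [rho, EuclideanSpace.inner_single_right]
  ring

lemma pd_log (f : E → ℝ) (hf : ContDiff ℝ 2 f) (hfpos : ∀ y, 0 < f y) (i : Fin n) :
    pd (fun z => Real.log (f z)) i = fun y => pd f i y / f y := by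
  funext y
  have hd : HasFDerivAt f (fderiv ℝ f y) y :=
    ((hf.differentiable (by norm_num)) y).hasFDerivAt
  rw [pd_eq_of_hasFDerivAt (hd.log (hfpos y).ne')]
  simp [pd, div_eq_inv_mul]

lemma contDiff_pd_log (f : E → ℝ) (hf : ContDiff ℝ 2 f) (hfpos : ∀ y, 0 < f y) (i : Fin n) :
    ContDiff ℝ 1 (pd (fun z => Real.log (f z)) i) := by
  rw [pd_log f hf hfpos i]
  exact (contDiff_pd_one hf i).div (hf.of_le (by norm_num)) fun y => (hfpos y).ne'

lemma pd_pd_log (f : E → ℝ) (hf : ContDiff ℝ 2 f) (hfpos : ∀ y, 0 < f y) (i : Fin n) (y : E) :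
    pd (pd (fun z => Real.log (f z)) i) i y
      = pd (pd f i) i y / f y - (pd f i y / f y)^2 := by
  rw [pd_log f hf hfpos i]
  have h1 : HasFDerivAt (pd f i) (fderiv ℝ (pd f i) y) y :=
    (((contDiff_pd_one hf i).differentiable (by norm_num)) y).hasFDerivAt
  have h2 : HasFDerivAt f (fderiv ℝ f y) y :=
    ((hf.differentiable (by norm_num)) y).hasFDerivAt
  have hne : f y ≠ 0 := (hfpos y).ne'
  have hinv : HasFDerivAt (fun z => (f z)⁻¹) ((-((f y)^2)⁻¹) • fderiv ℝ f y) y :=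
    (hasDerivAt_inv hne).comp_hasFDerivAt y h2
  have heq : (fun z => pd f i z / f z) = (fun z => pd f i z * (f z)⁻¹) := by
    funext z; rw [div_eq_mul_inv]
  rw [heq, show (fun z => pd f i z * (f z)⁻¹) = pd f i * (fun z => (f z)⁻¹) from rfl,
    pd_eq_of_hasFDerivAt (h1.mul hinv)]
  simp only [ContinuousLinearMap.add_apply, ContinuousLinearMap.smul_apply, smul_eq_mul]
  rw [show fderiv ℝ (pd f i) y (EuclideanSpace.single i 1) = pd (pd f i) i y from rfl,
      show fderiv ℝ f y (EuclideanSpace.single i 1) = pd f i y from rfl]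
  field_simp
  ring

lemma pd_eq_zero_of_locally_const {h : E → ℝ} {c : ℝ} {y : E} {i : Fin n}
    (hc : ∀ᶠ z in nhds y, h z = c) : pd h i y = 0 := by
  have h2 : fderiv ℝ h y = fderiv ℝ (fun _ : E => c) y :=
    Filter.EventuallyEq.fderiv_eq hc
  rw [pd, h2]
  simp

noncomputable def cut {n : ℕ} (k : ℕ) (y : EuclideanSpace ℝ (Fin n)) : ℝ :=
  Real.smoothTransition (2 - (((k:ℝ)+1)^2)⁻¹ * ‖y‖^2)

lemma contDiff_cut (k : ℕ) : ContDiff ℝ 2 (cut (n := n) k) :=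
  (Real.smoothTransition.contDiff (n := 2)).comp
    (contDiff_const.sub (contDiff_const.mul (contDiff_norm_sq ℝ)))

lemma cut_nonneg (k : ℕ) (y : E) : 0 ≤ cut k y := Real.smoothTransition.nonneg _

lemma cut_le_one (k : ℕ) (y : E) : cut k y ≤ 1 := Real.smoothTransition.le_one _

lemma cut_eq_one {k : ℕ} {y : E} (hy : ‖y‖ ≤ (k:ℝ)+1) : cut k y = 1 := by
  apply Real.smoothTransition.one_of_one_le
  have h1 : ‖y‖^2 ≤ ((k:ℝ)+1)^2 := by
    apply sq_le_sq' (by linarith [norm_nonneg y]) hy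
  have h2 : (0:ℝ) < ((k:ℝ)+1)^2 := by positivity
  have h3 : (((k:ℝ)+1)^2)⁻¹ * ‖y‖^2 ≤ 1 := by
    rw [inv_mul_eq_div, div_le_one h2]; exact h1
  linarith

lemma hasCompactSupport_cut (k : ℕ) : HasCompactSupport (cut (n := n) k) := by
  apply HasCompactSupport.intro (isCompact_closedBall (0 : E) (2*((k:ℝ)+1)))
  intro y hy
  simp only [Metric.mem_closedBall, dist_zero_right, not_le] at hy
  apply Real.smoothTransition.zero_of_nonpos
  have h2 : (0:ℝ) < ((k:ℝ)+1)^2 := by positivity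
  have h1 : 4*((k:ℝ)+1)^2 ≤ ‖y‖^2 := by nlinarith [norm_nonneg y]
  have h3 : (4:ℝ) ≤ (((k:ℝ)+1)^2)⁻¹ * ‖y‖^2 := by
    rw [inv_mul_eq_div, le_div_iff₀ h2]; linarith
  linarith

lemma pd_cut_eq_zero_of_lt {k : ℕ} {y : E} (hy : ‖y‖ < (k:ℝ)+1) (i : Fin n) :
    pd (cut k) i y = 0 := by
  apply pd_eq_zero_of_locally_const (c := 1)
  have hop : IsOpen {z : E | ‖z‖ < (k:ℝ)+1} := isOpen_lt continuous_norm continuous_const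
  filter_upwards [hop.mem_nhds hy] with z hz
  exact cut_eq_one (le_of_lt hz)

lemma pd_cut_eq_zero_of_gt {k : ℕ} {y : E} (hy : 2*((k:ℝ)+1)^2 < ‖y‖^2) (i : Fin n) :
    pd (cut k) i y = 0 := by
  apply pd_eq_zero_of_locally_const (c := 0)
  have hop : IsOpen {z : E | 2*((k:ℝ)+1)^2 < ‖z‖^2} :=
    isOpen_lt continuous_const (by continuity)
  filter_upwards [hop.mem_nhds hy] with z hz
  apply Real.smoothTransition.zero_of_nonpos
  have h2 : (0:ℝ) < ((k:ℝ)+1)^2 := by positivity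
  have h3 : (2:ℝ) ≤ (((k:ℝ)+1)^2)⁻¹ * ‖z‖^2 := by
    rw [inv_mul_eq_div, le_div_iff₀ h2]; linarith [le_of_lt hz]
  linarith

lemma pd_cut (k : ℕ) (y : E) (i : Fin n) :
    pd (cut k) i y
      = deriv Real.smoothTransition (2 - (((k:ℝ)+1)^2)⁻¹ * ‖y‖^2)
          * (-((((k:ℝ)+1)^2)⁻¹ * (2 * y i))) := by
  have h0 := (hasStrictFDerivAt_norm_sq y).hasFDerivAt
  have h1 := h0.const_mul ((((k:ℝ)+1)^2)⁻¹)
  have ha := h1.const_sub 2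
  have hθ : HasDerivAt Real.smoothTransition
      (deriv Real.smoothTransition (2 - (((k:ℝ)+1)^2)⁻¹ * ‖y‖^2))
      (2 - (((k:ℝ)+1)^2)⁻¹ * ‖y‖^2) :=
    ((Real.smoothTransition.contDiff (n := 1)).differentiable (by norm_num) _).hasDerivAt
  have hc : HasFDerivAt (cut (n := n) k) _ y := hθ.comp_hasFDerivAt y ha
  rw [pd_eq_of_hasFDerivAt hc]
  simp [EuclideanSpace.inner_single_right]

lemma exists_M : ∃ M : ℝ, 0 ≤ M ∧
    ∀ t ∈ Set.Icc (0:ℝ) 2, |deriv Real.smoothTransition t| ≤ M := by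
  have hc : ContinuousOn (deriv Real.smoothTransition) (Set.Icc 0 2) :=
    ((Real.smoothTransition.contDiff (n := 1)).continuous_deriv le_rfl).continuousOn
  obtain ⟨M, hM⟩ := isCompact_Icc.exists_bound_of_continuousOn hc
  refine ⟨M, ?_, fun t ht => by simpa [Real.norm_eq_abs] using hM t ht⟩
  have h0 := hM 0 (by norm_num)
  simp only [Real.norm_eq_abs] at h0
  exact le_trans (abs_nonneg _) h0

lemma gdot_cut_le {M : ℝ} (hM0 : 0 ≤ M)
    (hM : ∀ t ∈ Set.Icc (0:ℝ) 2, |deriv Real.smoothTransition t| ≤ M)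
    (k : ℕ) (y : E) : gdot (cut k) (cut k) y ≤ 8 * M^2 := by
  by_cases h : 2*((k:ℝ)+1)^2 < ‖y‖^2
  · have : gdot (cut k) (cut k) y = 0 := by
      simp [gdot, pd_cut_eq_zero_of_gt h]
    rw [this]; positivity
  · push_neg at h
    set c : ℝ := ((k:ℝ)+1)^2 with hcdef
    have hc1 : (1:ℝ) ≤ c := by
      have hk0 : (0:ℝ) ≤ (k:ℝ) := Nat.cast_nonneg k
      nlinarith
    have hcpos : (0:ℝ) < c := by positivity
    set a : ℝ := 2 - c⁻¹ * ‖y‖^2 with hadef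
    have hmem : a ∈ Set.Icc (0:ℝ) 2 := by
      constructor
      · have h3 : c⁻¹ * ‖y‖^2 ≤ 2 := by
          rw [inv_mul_eq_div, div_le_iff₀ hcpos]; linarith
        simp [hadef]; linarith
      · have : 0 ≤ c⁻¹ * ‖y‖^2 := by positivity
        simp [hadef]; linarith
    set d : ℝ := deriv Real.smoothTransition a with hddef
    have hd2 : d^2 ≤ M^2 := by
      have := hM a hmem
      have h1 := (abs_le.mp this).1
      have h2 := (abs_le.mp this).2
      nlinarith
    have hg : gdot (cut k) (cut k) y = d^2 * (c⁻¹)^2 * 4 * ‖y‖^2 := by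
      simp only [gdot, pd_cut, ← hcdef, ← hadef, ← hddef]
      rw [norm_sq_eq, Finset.mul_sum]
      apply Finset.sum_congr rfl
      intro i _
      ring
    rw [hg]
    have hinv1 : c⁻¹ ≤ 1 := by
      rw [inv_le_one_iff₀]; right; exact hc1
    have hinv0 : (0:ℝ) ≤ c⁻¹ := by positivity
    have hic : c⁻¹ * c = 1 := inv_mul_cancel₀ hcpos.ne'
    have hy2 : ‖y‖^2 ≤ 2*c := h
    calc d^2 * (c⁻¹)^2 * 4 * ‖y‖^2 ≤ M^2 * (c⁻¹)^2 * 4 * (2*c) := by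
          nlinarith [mul_le_mul_of_nonneg_right hd2 (by positivity : (0:ℝ) ≤ c⁻¹^2*4*‖y‖^2),
            mul_le_mul_of_nonneg_left hy2 (by positivity : (0:ℝ) ≤ M^2*c⁻¹^2*4)]
      _ = 8 * M^2 * (c⁻¹ * (c⁻¹ * c)) := by ring
      _ = 8 * M^2 * c⁻¹ := by rw [hic]; ring
      _ ≤ 8 * M^2 := by nlinarith

lemma eventually_cut (y : E) :
    ∀ᶠ k in Filter.atTop, cut k y = 1 ∧ ∀ i : Fin n, pd (cut k) i y = 0 := by
  filter_upwards [Filter.eventually_ge_atTop ⌈‖y‖⌉₊] with k hk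
  have h1 : ‖y‖ < (k:ℝ)+1 := by
    have h2 : ‖y‖ ≤ (⌈‖y‖⌉₊ : ℝ) := Nat.le_ceil _
    have h3 : ((⌈‖y‖⌉₊ : ℕ) : ℝ) ≤ (k:ℝ) := by exact_mod_cast hk
    linarith
  exact ⟨cut_eq_one h1.le, fun i => pd_cut_eq_zero_of_lt h1 i⟩

end Aux

section Core
variable {n : ℕ}
local notation "E" => EuclideanSpace ℝ (Fin n)

lemma pd_eq_zero_of_nmem_tsupport {η : E → ℝ} {x : E} (hx : x ∉ tsupport η) (i : Fin n) :
    pd η i x = 0 := by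
  apply pd_eq_zero_of_locally_const (c := 0)
  filter_upwards [(isOpen_compl_iff.mpr (isClosed_tsupport η)).mem_nhds hx] with z hz
  exact image_eq_zero_of_notMem_tsupport hz

lemma pd_eq_zero_of_eta {η h : E → ℝ} (hvan : ∀ z, η z = 0 → h z = 0) {y : E}
    (hy : y ∉ tsupport η) (i : Fin n) : pd h i y = 0 := by
  apply pd_eq_zero_of_locally_const (c := 0)
  filter_upwards [(isOpen_compl_iff.mpr (isClosed_tsupport η)).mem_nhds hy] with z hz
  exact hvan z (image_eq_zero_of_notMem_tsupport hz)

lemma integrable_eta {η G : E → ℝ} (hsupp : HasCompactSupport η) (hG : Continuous G)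
    (hvan : ∀ y, y ∉ tsupport η → G y = 0) : Integrable G := by
  apply hG.integrable_of_hasCompactSupport
  exact HasCompactSupport.intro hsupp hvan

lemma lap_log (f : E → ℝ) (hf : ContDiff ℝ 2 f) (hfpos : ∀ y, 0 < f y) (y : E) :
    lap (fun z => Real.log (f z)) y
      = lap f y / f y
        - gdot (fun z => Real.log (f z)) (fun z => Real.log (f z)) y := by
  have h2 : gdot (fun z => Real.log (f z)) (fun z => Real.log (f z)) y
      = ∑ i : Fin n, (pd f i y / f y)^2 := by
    simp only [gdot, pd_log f hf hfpos]
    exact Finset.sum_congr rfl fun i _ => (sq (pd f i y / f y)).symm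
  rw [h2]
  simp only [lap]
  rw [show ∑ i : Fin n, pd (pd (fun z => Real.log (f z)) i) i y
      = ∑ i : Fin n, (pd (pd f i) i y / f y - (pd f i y / f y)^2) from
    Finset.sum_congr rfl fun i _ => pd_pd_log f hf hfpos i y]
  rw [Finset.sum_sub_distrib, ← Finset.sum_div]

lemma ygrad_log (f : E → ℝ) (hf : ContDiff ℝ 2 f) (hfpos : ∀ y, 0 < f y) (y : E) :
    ygrad (fun z => Real.log (f z)) y = ygrad f y / f y := by
  simp only [ygrad, pd_log f hf hfpos]
  rw [Finset.sum_div]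
  exact Finset.sum_congr rfl fun i _ => (mul_div_assoc _ _ _).symm

lemma eigen_pointwise (p μ : ℝ) (hp : 1 < p) (w f : E → ℝ)
    (hf : ContDiff ℝ 2 f) (hfpos : ∀ y, 0 < f y)
    (heig : ∀ y, Lop p w f y = -μ * f y) (y : E) :
    p * |w y| ^ (p-1) + gdot (fun z => Real.log (f z)) (fun z => Real.log (f z)) y
      = (1/(p-1) - μ)
        - (lap (fun z => Real.log (f z)) y
            - (1/2) * ygrad (fun z => Real.log (f z)) y) := by
  have h := heig y
  simp only [Lop] at h
  rw [lap_log f hf hfpos y, ygrad_log f hf hfpos y]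
  have hfne : f y ≠ 0 := (hfpos y).ne'
  have hpne : p - 1 ≠ 0 := by linarith
  have h' : lap f y - (1/2)*ygrad f y = f y/(p-1) - p*|w y|^(p-1) * f y - μ * f y := by
    linarith
  have hkey : lap f y / f y - (1/2) * (ygrad f y / f y)
      = 1/(p-1) - μ - p * |w y|^(p-1) := by
    have e1 : lap f y / f y - (1/2) * (ygrad f y / f y)
        = (lap f y - (1/2)*ygrad f y)/f y := by ring
    rw [e1, h']
    field_simp
    ring
  linarith [hkey]

lemma core_ineq (p μ : ℝ) (hp : 1 < p) (w f : E → ℝ) (hwc : Continuous w)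
    (hf : ContDiff ℝ 2 f) (hfpos : ∀ y, 0 < f y)
    (heig : ∀ y, Lop p w f y = -μ * f y)
    (η : E → ℝ) (hη : ContDiff ℝ 2 η) (hsupp : HasCompactSupport η) :
    ∫ y : E, η y^2 * (p * |w y| ^ (p-1)
        + gdot (fun z => Real.log (f z)) (fun z => Real.log (f z)) y) * rho y
      ≤ 2*(1/(p-1) - μ) * (∫ y : E, η y^2 * rho y)
        + 4 * ∫ y : E, gdot η η y * rho y := by
  have hηc : Continuous η := hη.continuous
  have hρc : Continuous (rho (n := n)) := contDiff_rho.continuous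
  have hηd : Differentiable ℝ η := hη.differentiable (by norm_num)
  have hpdηc : ∀ i : Fin n, Continuous (pd η i) := fun i => (contDiff_pd_one hη i).continuous
  have hpdg1 : ∀ i : Fin n, ContDiff ℝ 1 (pd (fun z => Real.log (f z)) i) :=
    fun i => contDiff_pd_log f hf hfpos i
  have hpdgc : ∀ i : Fin n, Continuous (pd (fun z => Real.log (f z)) i) :=
    fun i => (hpdg1 i).continuous
  have hpdpdgc : ∀ i : Fin n, Continuous (pd (pd (fun z => Real.log (f z)) i) i) :=
    fun i => continuous_pd (hpdg1 i) i
  have hwp : Continuous (fun y : E => |w y| ^ (p-1)) :=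
    hwc.abs.rpow_const (fun y => Or.inr (by linarith))
  have hcoord : ∀ i : Fin n, Continuous (fun y : E => y i) := fun i =>
    (continuous_apply i).comp (PiLp.continuous_ofLp 2 fun _ : Fin n => ℝ)
  have hggc : Continuous (gdot (fun z => Real.log (f z)) (fun z => Real.log (f z))) :=
    continuous_finset_sum _ fun i _ => (hpdgc i).mul (hpdgc i)
  have hηηc : Continuous (gdot η η) :=
    continuous_finset_sum _ fun i _ => (hpdηc i).mul (hpdηc i)
  have hηgc : Continuous (gdot η (fun z => Real.log (f z))) :=
    continuous_finset_sum _ fun i _ => (hpdηc i).mul (hpdgc i)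
  have hlapgc : Continuous (lap (fun z => Real.log (f z))) :=
    continuous_finset_sum _ fun i _ => hpdpdgc i
  have hygradgc : Continuous (ygrad (fun z => Real.log (f z))) :=
    continuous_finset_sum _ fun i _ => (hcoord i).mul (hpdgc i)
  have hF : ContDiff ℝ 2 (fun y : E => η y^2 * rho y) := (hη.pow 2).mul contDiff_rho
  have hFd : Differentiable ℝ (fun y : E => η y^2 * rho y) := hF.differentiable (by norm_num)
  have hFc : Continuous (fun y : E => η y^2 * rho y) := hF.continuous
  have hpdFc : ∀ i : Fin n, Continuous (pd (fun y : E => η y^2 * rho y) i) :=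
    fun i => (contDiff_pd_one hF i).continuous
  have hFvan : ∀ z, η z = 0 → η z^2 * rho z = 0 := fun z h => by simp [h]
  -- integrability of the main integrands
  have iL : Integrable (fun y : E => η y^2 * (p * |w y| ^ (p-1)
      + gdot (fun z => Real.log (f z)) (fun z => Real.log (f z)) y) * rho y) :=
    integrable_eta hsupp (((hηc.pow 2).mul ((continuous_const.mul hwp).add hggc)).mul hρc)
      (fun y hy => by simp [image_eq_zero_of_notMem_tsupport hy])
  have iB : Integrable (fun y : E => η y^2 * rho y) :=
    integrable_eta hsupp ((hηc.pow 2).mul hρc)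
      (fun y hy => by simp [image_eq_zero_of_notMem_tsupport hy])
  have iGd : Integrable (fun y : E => gdot η η y * rho y) :=
    integrable_eta hsupp (hηηc.mul hρc)
      (fun y hy => by simp [gdot, pd_eq_zero_of_nmem_tsupport hy])
  have iX : Integrable (fun y : E => (η y * rho y)
      * gdot η (fun z => Real.log (f z)) y) :=
    integrable_eta hsupp ((hηc.mul hρc).mul hηgc)
      (fun y hy => by simp [image_eq_zero_of_notMem_tsupport hy])
  have iFlap : Integrable (fun y : E => (η y^2 * rho y)
      * lap (fun z => Real.log (f z)) y) :=
    integrable_eta hsupp (hFc.mul hlapgc)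
      (fun y hy => by simp [image_eq_zero_of_notMem_tsupport hy])
  have iFygrad : Integrable (fun y : E => (η y^2 * rho y)
      * ygrad (fun z => Real.log (f z)) y) :=
    integrable_eta hsupp (hFc.mul hygradgc)
      (fun y hy => by simp [image_eq_zero_of_notMem_tsupport hy])
  -- pd of F = η²ρ
  have hpdF : ∀ (i : Fin n) (y : E), pd (fun z : E => η z^2 * rho z) i y
      = 2 * η y * pd η i y * rho y - (y i)/2 * (η y^2 * rho y) := by
    intro i y
    have hηsq : DifferentiableAt ℝ (fun z : E => η z^2) y :=
      ((hη.pow 2).differentiable (by norm_num)) y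
    have hρd : DifferentiableAt ℝ (rho (n := n)) y :=
      (contDiff_rho.differentiable (by norm_num)) y
    rw [pd_mul hηsq hρd i, pd_rho]
    have h2 : (fun z : E => η z^2) = fun z => η z * η z := by funext z; ring
    have h3 : pd (fun z : E => η z^2) i y = 2 * η y * pd η i y := by
      rw [h2, pd_mul (hηd y) (hηd y) i]; ring
    rw [h3]; ring
  -- integration by parts in direction i
  have key : ∀ i : Fin n,
      ∫ y : E, (η y^2 * rho y) * pd (pd (fun z => Real.log (f z)) i) i y
        = - ∫ y : E, pd (fun z : E => η z^2 * rho z) i y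
            * pd (fun z => Real.log (f z)) i y := by
    intro i
    have i1 : Integrable (fun y : E => pd (fun z : E => η z^2 * rho z) i y
        * pd (fun z => Real.log (f z)) i y) :=
      integrable_eta hsupp ((hpdFc i).mul (hpdgc i))
        (fun y hy => by rw [pd_eq_zero_of_eta hFvan hy i, zero_mul])
    have i2 : Integrable (fun y : E => (η y^2 * rho y)
        * pd (pd (fun z => Real.log (f z)) i) i y) :=
      integrable_eta hsupp (hFc.mul (hpdpdgc i))
        (fun y hy => by simp [image_eq_zero_of_notMem_tsupport hy])
    have i3 : Integrable (fun y : E => (η y^2 * rho y)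
        * pd (fun z => Real.log (f z)) i y) :=
      integrable_eta hsupp (hFc.mul (hpdgc i))
        (fun y hy => by simp [image_eq_zero_of_notMem_tsupport hy])
    exact integral_mul_fderiv_eq_neg_fderiv_mul_of_integrable i1 i2 i3 (fun x _ => hFd x)
      (fun x _ => ((hpdg1 i).differentiable (by norm_num)) x)
  -- per-direction rearranged identity
  have per_i : ∀ i : Fin n,
      ∫ y : E, (η y^2 * rho y) * pd (pd (fun z => Real.log (f z)) i) i y
        = -2 * (∫ y : E, (η y * rho y) * (pd η i y * pd (fun z => Real.log (f z)) i y))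
          + (1/2) * (∫ y : E, (y i * pd (fun z => Real.log (f z)) i y)
              * (η y^2 * rho y)) := by
    intro i
    rw [key i]
    have iA : Integrable (fun y : E =>
        2 * ((η y * rho y) * (pd η i y * pd (fun z => Real.log (f z)) i y))) :=
      integrable_eta hsupp
        (continuous_const.mul ((hηc.mul hρc).mul ((hpdηc i).mul (hpdgc i))))
        (fun y hy => by simp [image_eq_zero_of_notMem_tsupport hy])
    have iBB : Integrable (fun y : E =>
        -((y i * pd (fun z => Real.log (f z)) i y) * (η y^2 * rho y) / 2)) :=
      integrable_eta hsupp
        (((((hcoord i).mul (hpdgc i)).mul hFc).div_const 2).neg)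
        (fun y hy => by simp [image_eq_zero_of_notMem_tsupport hy])
    have hsplit : (fun y : E => pd (fun z : E => η z^2 * rho z) i y
          * pd (fun z => Real.log (f z)) i y)
        = fun y => 2 * ((η y * rho y) * (pd η i y * pd (fun z => Real.log (f z)) i y))
            + -((y i * pd (fun z => Real.log (f z)) i y) * (η y^2 * rho y) / 2) := by
      funext y
      rw [hpdF i y]
      ring
    rw [hsplit, integral_add iA iBB, integral_const_mul, integral_neg, integral_div]
    ring
  -- summed identities
  have S_lap : ∫ y : E, (η y^2 * rho y) * lap (fun z => Real.log (f z)) y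
      = ∑ i : Fin n, ∫ y : E, (η y^2 * rho y)
          * pd (pd (fun z => Real.log (f z)) i) i y := by
    rw [← integral_finset_sum]
    · congr 1
      funext y
      rw [lap, Finset.mul_sum]
    · intro i _
      exact integrable_eta hsupp (hFc.mul (hpdpdgc i))
        (fun y hy => by simp [image_eq_zero_of_notMem_tsupport hy])
  have S_ygrad : ∫ y : E, (η y^2 * rho y) * ygrad (fun z => Real.log (f z)) y
      = ∑ i : Fin n, ∫ y : E, (y i * pd (fun z => Real.log (f z)) i y)
          * (η y^2 * rho y) := by
    rw [← integral_finset_sum]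
    · congr 1
      funext y
      rw [ygrad, Finset.mul_sum]
      exact Finset.sum_congr rfl fun i _ => by ring
    · intro i _
      exact integrable_eta hsupp (((hcoord i).mul (hpdgc i)).mul hFc)
        (fun y hy => by simp [image_eq_zero_of_notMem_tsupport hy])
  have S_gd : ∫ y : E, (η y * rho y) * gdot η (fun z => Real.log (f z)) y
      = ∑ i : Fin n, ∫ y : E, (η y * rho y)
          * (pd η i y * pd (fun z => Real.log (f z)) i y) := by
    rw [← integral_finset_sum]
    · congr 1
      funext y
      rw [gdot, Finset.mul_sum]
    · intro i _
      exact integrable_eta hsupp ((hηc.mul hρc).mul ((hpdηc i).mul (hpdgc i)))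
        (fun y hy => by simp [image_eq_zero_of_notMem_tsupport hy])
  have E_lap : ∫ y : E, (η y^2 * rho y) * lap (fun z => Real.log (f z)) y
      = -2 * (∫ y : E, (η y * rho y) * gdot η (fun z => Real.log (f z)) y)
        + (1/2) * (∫ y : E, (η y^2 * rho y) * ygrad (fun z => Real.log (f z)) y) := by
    rw [S_lap, S_gd, S_ygrad]
    rw [Finset.sum_congr rfl fun i _ => per_i i]
    rw [Finset.sum_add_distrib, ← Finset.mul_sum, ← Finset.mul_sum]
  -- main identity
  have main_eq : ∫ y : E, η y^2 * (p * |w y| ^ (p-1)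
        + gdot (fun z => Real.log (f z)) (fun z => Real.log (f z)) y) * rho y
      = (1/(p-1) - μ) * (∫ y : E, η y^2 * rho y)
        + 2 * (∫ y : E, (η y * rho y) * gdot η (fun z => Real.log (f z)) y) := by
    have i9 : Integrable (fun y : E => (η y^2 * rho y) * lap (fun z => Real.log (f z)) y
        - (1/2) * ((η y^2 * rho y) * ygrad (fun z => Real.log (f z)) y)) :=
      iFlap.sub (iFygrad.const_mul _)
    have hpt : (fun y : E => η y^2 * (p * |w y| ^ (p-1)
          + gdot (fun z => Real.log (f z)) (fun z => Real.log (f z)) y) * rho y)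
        = fun y => (1/(p-1) - μ) * (η y^2 * rho y)
            - ((η y^2 * rho y) * lap (fun z => Real.log (f z)) y
              - (1/2) * ((η y^2 * rho y) * ygrad (fun z => Real.log (f z)) y)) := by
      funext y
      have hep := eigen_pointwise p μ hp w f hf hfpos heig y
      calc η y^2 * (p * |w y| ^ (p-1)
            + gdot (fun z => Real.log (f z)) (fun z => Real.log (f z)) y) * rho y
          = (η y^2 * rho y) * (p * |w y| ^ (p-1)
            + gdot (fun z => Real.log (f z)) (fun z => Real.log (f z)) y) := by ring
        _ = (η y^2 * rho y) * ((1/(p-1) - μ)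
            - (lap (fun z => Real.log (f z)) y
              - (1/2) * ygrad (fun z => Real.log (f z)) y)) := by rw [hep]
        _ = _ := by ring
    rw [hpt, integral_sub (iB.const_mul _) i9,
      integral_const_mul, integral_sub iFlap (iFygrad.const_mul _),
      integral_const_mul, E_lap]
    ring
  -- pointwise AM-GM bound
  have hgd_ineq : ∀ y : E, 2 * ((η y * rho y) * gdot η (fun z => Real.log (f z)) y)
      ≤ (1/2) * (η y^2 * (p * |w y| ^ (p-1)
          + gdot (fun z => Real.log (f z)) (fun z => Real.log (f z)) y) * rho y)
        + 2 * (gdot η η y * rho y) := by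
    intro y
    have hρpos : (0:ℝ) < rho y := Real.exp_pos _
    have hsum : 2 * (η y * gdot η (fun z => Real.log (f z)) y)
        ≤ (1/2) * (η y^2 * gdot (fun z => Real.log (f z)) (fun z => Real.log (f z)) y)
          + 2 * gdot η η y := by
      have h1 : 2 * (η y * gdot η (fun z => Real.log (f z)) y)
          = ∑ i : Fin n, 2 * (η y * (pd η i y * pd (fun z => Real.log (f z)) i y)) := by
        rw [gdot, Finset.mul_sum, Finset.mul_sum]
      have h2 : (1/2) * (η y^2
            * gdot (fun z => Real.log (f z)) (fun z => Real.log (f z)) y)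
            + 2 * gdot η η y
          = ∑ i : Fin n, ((1/2) * (η y^2 * (pd (fun z => Real.log (f z)) i y
              * pd (fun z => Real.log (f z)) i y))
            + 2 * (pd η i y * pd η i y)) := by
        rw [gdot, gdot, Finset.mul_sum, Finset.mul_sum, Finset.mul_sum,
          ← Finset.sum_add_distrib]
      rw [h1, h2]
      apply Finset.sum_le_sum
      intro i _
      nlinarith [sq_nonneg (η y * pd (fun z => Real.log (f z)) i y - 2 * pd η i y)]
    have hw0 : (0:ℝ) ≤ p * |w y| ^ (p-1) :=
      mul_nonneg (by linarith) (Real.rpow_nonneg (abs_nonneg _) _)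
    nlinarith [mul_le_mul_of_nonneg_right hsum hρpos.le,
      mul_nonneg (mul_nonneg (sq_nonneg (η y)) hw0) hρpos.le]
  -- integral inequality
  have int_ineq : 2 * (∫ y : E, (η y * rho y) * gdot η (fun z => Real.log (f z)) y)
      ≤ (1/2) * (∫ y : E, η y^2 * (p * |w y| ^ (p-1)
          + gdot (fun z => Real.log (f z)) (fun z => Real.log (f z)) y) * rho y)
        + 2 * (∫ y : E, gdot η η y * rho y) := by
    have iLHS : Integrable (fun y : E =>
        2 * ((η y * rho y) * gdot η (fun z => Real.log (f z)) y)) := iX.const_mul 2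
    have iR1 : Integrable (fun y : E => (1/2) * (η y^2 * (p * |w y| ^ (p-1)
        + gdot (fun z => Real.log (f z)) (fun z => Real.log (f z)) y) * rho y)) :=
      iL.const_mul _
    have iR2 : Integrable (fun y : E => 2 * (gdot η η y * rho y)) := iGd.const_mul 2
    have iRHS : Integrable (fun y : E => (1/2) * (η y^2 * (p * |w y| ^ (p-1)
        + gdot (fun z => Real.log (f z)) (fun z => Real.log (f z)) y) * rho y)
          + 2 * (gdot η η y * rho y)) := iR1.add iR2
    have h := integral_mono iLHS iRHS hgd_ineq
    rwa [integral_add iR1 iR2, integral_const_mul, integral_const_mul,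
      integral_const_mul] at h
  linarith [main_eq, int_ineq]

end Core

theorem stmt_5 {n : ℕ} (p μ : ℝ) (hp : 1 < p) (w f φ : EuclideanSpace ℝ (Fin n) → ℝ)
    (hw : ContDiff ℝ (⊤ : ℕ∞) w) (heq : ProfileEq p w)
    (hf : ContDiff ℝ 2 f) (hfpos : ∀ y, 0 < f y)
    (heig : ∀ y, Lop p w f y = -μ * f y)
    (hφ : ContDiff ℝ 2 φ)
    (hφint : Integrable (fun y : EuclideanSpace ℝ (Fin n) =>
      ((φ y)^2 + gdot φ φ y) * Real.exp (-‖y‖^2/4))) :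
    ∫ y : EuclideanSpace ℝ (Fin n),
        (φ y)^2 * (p * |w y| ^ (p-1) + gdot (fun z => Real.log (f z)) (fun z => Real.log (f z)) y)
          * Real.exp (-‖y‖^2/4)
      ≤ ∫ y : EuclideanSpace ℝ (Fin n),
          (4 * gdot φ φ y - 2 * (μ - 1/(p-1)) * (φ y)^2) * Real.exp (-‖y‖^2/4) := by
  have hwc : Continuous w := hw.continuous
  obtain ⟨M, hM0, hM⟩ := exists_M
  have hφc : Continuous φ := hφ.continuous
  have hφd : Differentiable ℝ φ := hφ.differentiable (by norm_num)
  have hρc : Continuous (rho (n := n)) := contDiff_rho.continuous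
  have hρpos : ∀ y : EuclideanSpace ℝ (Fin n), 0 < rho y := fun y => Real.exp_pos _
  have hpdφc : ∀ i : Fin n, Continuous (pd φ i) := fun i => (contDiff_pd_one hφ i).continuous
  have hφφc : Continuous (gdot φ φ) :=
    continuous_finset_sum _ fun i _ => (hpdφc i).mul (hpdφc i)
  have hpdgc : ∀ i : Fin n, Continuous (pd (fun z => Real.log (f z)) i) :=
    fun i => (contDiff_pd_log f hf hfpos i).continuous
  have hggc : Continuous (gdot (fun z => Real.log (f z)) (fun z => Real.log (f z))) :=
    continuous_finset_sum _ fun i _ => (hpdgc i).mul (hpdgc i)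
  have hwp : Continuous (fun y : EuclideanSpace ℝ (Fin n) => |w y| ^ (p-1)) :=
    hwc.abs.rpow_const (fun y => Or.inr (by linarith))
  have hgg0 : ∀ y, 0 ≤ gdot (fun z => Real.log (f z)) (fun z => Real.log (f z)) y :=
    fun y => Finset.sum_nonneg fun i _ => mul_self_nonneg _
  have hφφ0 : ∀ y, 0 ≤ gdot φ φ y :=
    fun y => Finset.sum_nonneg fun i _ => mul_self_nonneg _
  have hw0 : ∀ y, (0:ℝ) ≤ p * |w y|^(p-1) :=
    fun y => mul_nonneg (by linarith) (Real.rpow_nonneg (abs_nonneg _) _)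
  -- base integrability
  have hφint' : Integrable (fun y : EuclideanSpace ℝ (Fin n) =>
      ((φ y)^2 + gdot φ φ y) * rho y) := hφint
  have hIφ : Integrable (fun y : EuclideanSpace ℝ (Fin n) => (φ y)^2 * rho y) := by
    apply hφint'.mono' (((hφc.pow 2).mul hρc).aestronglyMeasurable)
    filter_upwards with y
    rw [Real.norm_eq_abs, Pi.mul_apply, Pi.pow_apply,
      abs_of_nonneg (mul_nonneg (sq_nonneg _) (hρpos y).le)]
    nlinarith [hφφ0 y, (hρpos y).le, mul_nonneg (hφφ0 y) (hρpos y).le]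
  have hIg : Integrable (fun y : EuclideanSpace ℝ (Fin n) => gdot φ φ y * rho y) := by
    apply hφint'.mono' ((hφφc.mul hρc).aestronglyMeasurable)
    filter_upwards with y
    rw [Real.norm_eq_abs, Pi.mul_apply, abs_of_nonneg (mul_nonneg (hφφ0 y) (hρpos y).le)]
    nlinarith [sq_nonneg (φ y), (hρpos y).le, mul_nonneg (sq_nonneg (φ y)) (hρpos y).le]
  -- restate goal with rho
  show (∫ y : EuclideanSpace ℝ (Fin n), (φ y)^2 * (p * |w y| ^ (p-1)
        + gdot (fun z => Real.log (f z)) (fun z => Real.log (f z)) y) * rho y)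
      ≤ ∫ y : EuclideanSpace ℝ (Fin n),
          (4 * gdot φ φ y - 2 * (μ - 1/(p-1)) * (φ y)^2) * rho y
  -- evaluate RHS
  have hRHS : (∫ y : EuclideanSpace ℝ (Fin n),
        (4 * gdot φ φ y - 2 * (μ - 1/(p-1)) * (φ y)^2) * rho y)
      = 2*(1/(p-1) - μ) * (∫ y : EuclideanSpace ℝ (Fin n), (φ y)^2 * rho y)
        + 4 * (∫ y : EuclideanSpace ℝ (Fin n), gdot φ φ y * rho y) := by
    rw [show (fun y : EuclideanSpace ℝ (Fin n) =>
        (4 * gdot φ φ y - 2 * (μ - 1/(p-1)) * (φ y)^2) * rho y)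
        = fun y => (2*(1/(p-1) - μ)) * ((φ y)^2 * rho y) + 4 * (gdot φ φ y * rho y) from
      funext fun y => by ring]
    rw [integral_add (hIφ.const_mul _) (hIg.const_mul 4), integral_const_mul,
      integral_const_mul]
  rw [hRHS]
  -- cutoff test functions
  have hηC : ∀ k : ℕ, ContDiff ℝ 2 (fun y : EuclideanSpace ℝ (Fin n) => φ y * cut k y) :=
    fun k => hφ.mul ((contDiff_cut k))
  have hηS : ∀ k : ℕ, HasCompactSupport
      (fun y : EuclideanSpace ℝ (Fin n) => φ y * cut k y) :=
    fun k => (hasCompactSupport_cut k).mul_left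
  have hcore : ∀ k : ℕ,
      (∫ y : EuclideanSpace ℝ (Fin n), (φ y * cut k y)^2 * (p * |w y| ^ (p-1)
          + gdot (fun z => Real.log (f z)) (fun z => Real.log (f z)) y) * rho y)
        ≤ 2*(1/(p-1) - μ)
            * (∫ y : EuclideanSpace ℝ (Fin n), (φ y * cut k y)^2 * rho y)
          + 4 * ∫ y : EuclideanSpace ℝ (Fin n),
              gdot (fun z => φ z * cut k z) (fun z => φ z * cut k z) y * rho y :=
    fun k => core_ineq p μ hp w f hwc hf hfpos heig
      (fun y => φ y * cut k y) (hηC k) (hηS k)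
  -- nonnegativity and integrability of the truncated LHS integrands
  have hl0 : ∀ (k : ℕ) (y : EuclideanSpace ℝ (Fin n)),
      (0:ℝ) ≤ (φ y * cut k y)^2 * (p * |w y| ^ (p-1)
        + gdot (fun z => Real.log (f z)) (fun z => Real.log (f z)) y) * rho y :=
    fun k y => mul_nonneg (mul_nonneg (sq_nonneg _)
      (add_nonneg (hw0 y) (hgg0 y))) (hρpos y).le
  have hL0 : ∀ y : EuclideanSpace ℝ (Fin n),
      (0:ℝ) ≤ (φ y)^2 * (p * |w y| ^ (p-1)
        + gdot (fun z => Real.log (f z)) (fun z => Real.log (f z)) y) * rho y :=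
    fun y => mul_nonneg (mul_nonneg (sq_nonneg _)
      (add_nonneg (hw0 y) (hgg0 y))) (hρpos y).le
  have hIl : ∀ k : ℕ, Integrable (fun y : EuclideanSpace ℝ (Fin n) =>
      (φ y * cut k y)^2 * (p * |w y| ^ (p-1)
        + gdot (fun z => Real.log (f z)) (fun z => Real.log (f z)) y) * rho y) :=
    fun k => integrable_eta (hηS k)
      ((((hφc.mul (contDiff_cut k).continuous).pow 2).mul
        ((continuous_const.mul hwp).add hggc)).mul hρc)
      (fun y hy => by simp [image_eq_zero_of_notMem_tsupport hy])
  -- dominated convergence : B_k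
  have hB : Filter.Tendsto
      (fun k : ℕ => ∫ y : EuclideanSpace ℝ (Fin n), (φ y * cut k y)^2 * rho y)
      Filter.atTop
      (nhds (∫ y : EuclideanSpace ℝ (Fin n), (φ y)^2 * rho y)) := by
    refine tendsto_integral_of_dominated_convergence
      (fun y => (φ y)^2 * rho y)
      (fun k => (((hφc.mul (contDiff_cut k).continuous).pow 2).mul hρc).aestronglyMeasurable)
      hIφ ?_ ?_
    · intro k
      filter_upwards with y
      rw [Real.norm_eq_abs, abs_of_nonneg (mul_nonneg (sq_nonneg _) (hρpos y).le)]
      have hχ2 : (cut k y)^2 ≤ 1 := by nlinarith [cut_nonneg k y, cut_le_one k y]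
      nlinarith [mul_nonneg (sq_nonneg (φ y)) (hρpos y).le, (hρpos y).le,
        mul_nonneg (mul_nonneg (sq_nonneg (φ y)) (sub_nonneg.mpr hχ2)) (hρpos y).le]
    · filter_upwards with y
      apply Filter.Tendsto.congr' _ tendsto_const_nhds
      filter_upwards [eventually_cut y] with k hk
      rw [hk.1, mul_one]
  -- dominated convergence : G_k
  have hG : Filter.Tendsto
      (fun k : ℕ => ∫ y : EuclideanSpace ℝ (Fin n),
        gdot (fun z => φ z * cut k z) (fun z => φ z * cut k z) y * rho y)
      Filter.atTop
      (nhds (∫ y : EuclideanSpace ℝ (Fin n), gdot φ φ y * rho y)) := by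
    have hIbound : Integrable (fun y : EuclideanSpace ℝ (Fin n) =>
        (2*gdot φ φ y + (16*M^2)*(φ y)^2) * rho y) := by
      rw [show (fun y : EuclideanSpace ℝ (Fin n) =>
          (2*gdot φ φ y + (16*M^2)*(φ y)^2) * rho y)
          = fun y => 2*(gdot φ φ y * rho y) + (16*M^2)*((φ y)^2 * rho y) from
        funext fun y => by ring]
      exact (hIg.const_mul 2).add (hIφ.const_mul _)
    refine tendsto_integral_of_dominated_convergence
      (fun y => (2*gdot φ φ y + (16*M^2)*(φ y)^2) * rho y)
      (fun k => ((continuous_finset_sum _ fun i _ =>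
        ((contDiff_pd_one (hηC k) i).continuous).mul
          ((contDiff_pd_one (hηC k) i).continuous)).mul hρc).aestronglyMeasurable)
      hIbound ?_ ?_
    · intro k
      filter_upwards with y
      have hgk0 : (0:ℝ) ≤ gdot (fun z => φ z * cut k z) (fun z => φ z * cut k z) y :=
        Finset.sum_nonneg fun i _ => mul_self_nonneg _
      rw [Real.norm_eq_abs, abs_of_nonneg (mul_nonneg hgk0 (hρpos y).le)]
      apply mul_le_mul_of_nonneg_right _ (hρpos y).le
      have hpdk : ∀ i : Fin n, pd (fun z => φ z * cut k z) i y
          = pd φ i y * cut k y + φ y * pd (cut k) i y :=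
        fun i => pd_mul (hφd y) (((contDiff_cut k).differentiable (by norm_num)) y) i
      have hχ2 : (cut k y)^2 ≤ 1 := by nlinarith [cut_nonneg k y, cut_le_one k y]
      have hsum : gdot (fun z => φ z * cut k z) (fun z => φ z * cut k z) y
          ≤ 2 * gdot φ φ y + 2*(φ y)^2 * gdot (cut k) (cut k) y := by
        have e1 : gdot (fun z => φ z * cut k z) (fun z => φ z * cut k z) y
            = ∑ i : Fin n, ((pd φ i y * cut k y + φ y * pd (cut k) i y)
                * (pd φ i y * cut k y + φ y * pd (cut k) i y)) := by
          rw [gdot]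
          exact Finset.sum_congr rfl fun i _ => by rw [hpdk i]
        have e2 : 2 * gdot φ φ y + 2*(φ y)^2 * gdot (cut k) (cut k) y
            = ∑ i : Fin n, (2*(pd φ i y * pd φ i y)
                + 2*(φ y)^2*(pd (cut k) i y * pd (cut k) i y)) := by
          rw [gdot, gdot, Finset.mul_sum, Finset.mul_sum, ← Finset.sum_add_distrib]
        rw [e1, e2]
        apply Finset.sum_le_sum
        intro i _
        nlinarith [sq_nonneg (pd φ i y * cut k y - φ y * pd (cut k) i y),
          mul_nonneg (sq_nonneg (pd φ i y)) (sub_nonneg.mpr hχ2),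
          sq_nonneg (φ y * pd (cut k) i y)]
      have hb := gdot_cut_le hM0 hM k y
      nlinarith [sq_nonneg (φ y)]
    · filter_upwards with y
      apply Filter.Tendsto.congr' _ tendsto_const_nhds
      filter_upwards [eventually_cut y] with k hk
      have e3 : gdot (fun z => φ z * cut k z) (fun z => φ z * cut k z) y
          = gdot φ φ y := by
        rw [gdot, gdot]
        apply Finset.sum_congr rfl
        intro i _
        rw [pd_mul (hφd y) (((contDiff_cut k).differentiable (by norm_num)) y) i,
          hk.1, hk.2 i]
        ring
      rw [e3]
  -- limit of the right-hand sides
  have hR : Filter.Tendsto (fun k : ℕ =>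
      2*(1/(p-1) - μ)
          * (∫ y : EuclideanSpace ℝ (Fin n), (φ y * cut k y)^2 * rho y)
        + 4 * ∫ y : EuclideanSpace ℝ (Fin n),
            gdot (fun z => φ z * cut k z) (fun z => φ z * cut k z) y * rho y)
      Filter.atTop
      (nhds (2*(1/(p-1) - μ)
          * (∫ y : EuclideanSpace ℝ (Fin n), (φ y)^2 * rho y)
        + 4 * (∫ y : EuclideanSpace ℝ (Fin n), gdot φ φ y * rho y))) :=
    (hB.const_mul _).add (hG.const_mul 4)
  have hR0 : (0:ℝ) ≤ 2*(1/(p-1) - μ)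
      * (∫ y : EuclideanSpace ℝ (Fin n), (φ y)^2 * rho y)
      + 4 * (∫ y : EuclideanSpace ℝ (Fin n), gdot φ φ y * rho y) :=
    ge_of_tendsto hR (Filter.Eventually.of_forall fun k =>
      le_trans (integral_nonneg (hl0 k)) (hcore k))
  -- Fatou
  have hLcont : Continuous (fun y : EuclideanSpace ℝ (Fin n) =>
      (φ y)^2 * (p * |w y| ^ (p-1)
        + gdot (fun z => Real.log (f z)) (fun z => Real.log (f z)) y) * rho y) :=
    (((hφc.pow 2).mul ((continuous_const.mul hwp).add hggc)).mul hρc)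
  have hlcont : ∀ k : ℕ, Continuous (fun y : EuclideanSpace ℝ (Fin n) =>
      (φ y * cut k y)^2 * (p * |w y| ^ (p-1)
        + gdot (fun z => Real.log (f z)) (fun z => Real.log (f z)) y) * rho y) :=
    fun k => ((((hφc.mul (contDiff_cut k).continuous).pow 2).mul
      ((continuous_const.mul hwp).add hggc)).mul hρc)
  have hplim : ∀ y : EuclideanSpace ℝ (Fin n),
      Filter.Tendsto (fun k : ℕ => (φ y * cut k y)^2 * (p * |w y| ^ (p-1)
          + gdot (fun z => Real.log (f z)) (fun z => Real.log (f z)) y) * rho y)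
        Filter.atTop
        (nhds ((φ y)^2 * (p * |w y| ^ (p-1)
          + gdot (fun z => Real.log (f z)) (fun z => Real.log (f z)) y) * rho y)) := by
    intro y
    apply Filter.Tendsto.congr' _ tendsto_const_nhds
    filter_upwards [eventually_cut y] with k hk
    rw [hk.1, mul_one]
  have hchain : (∫⁻ y : EuclideanSpace ℝ (Fin n),
        ENNReal.ofReal ((φ y)^2 * (p * |w y| ^ (p-1)
          + gdot (fun z => Real.log (f z)) (fun z => Real.log (f z)) y) * rho y))
      ≤ ENNReal.ofReal (2*(1/(p-1) - μ)
          * (∫ y : EuclideanSpace ℝ (Fin n), (φ y)^2 * rho y)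
        + 4 * (∫ y : EuclideanSpace ℝ (Fin n), gdot φ φ y * rho y)) := by
    have step1 : (∫⁻ y : EuclideanSpace ℝ (Fin n),
          ENNReal.ofReal ((φ y)^2 * (p * |w y| ^ (p-1)
            + gdot (fun z => Real.log (f z)) (fun z => Real.log (f z)) y) * rho y))
        = ∫⁻ y : EuclideanSpace ℝ (Fin n), Filter.liminf (fun k : ℕ =>
            ENNReal.ofReal ((φ y * cut k y)^2 * (p * |w y| ^ (p-1)
              + gdot (fun z => Real.log (f z)) (fun z => Real.log (f z)) y) * rho y))
            Filter.atTop := by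
      apply lintegral_congr
      intro y
      exact ((ENNReal.tendsto_ofReal (hplim y)).liminf_eq).symm
    rw [step1]
    calc (∫⁻ y : EuclideanSpace ℝ (Fin n), Filter.liminf (fun k : ℕ =>
            ENNReal.ofReal ((φ y * cut k y)^2 * (p * |w y| ^ (p-1)
              + gdot (fun z => Real.log (f z)) (fun z => Real.log (f z)) y) * rho y))
            Filter.atTop)
        ≤ Filter.liminf (fun k : ℕ => ∫⁻ y : EuclideanSpace ℝ (Fin n),
            ENNReal.ofReal ((φ y * cut k y)^2 * (p * |w y| ^ (p-1)
              + gdot (fun z => Real.log (f z)) (fun z => Real.log (f z)) y) * rho y))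
            Filter.atTop :=
          lintegral_liminf_le fun k => ((hlcont k).measurable).ennreal_ofReal
      _ = Filter.liminf (fun k : ℕ => ENNReal.ofReal
            (∫ y : EuclideanSpace ℝ (Fin n), (φ y * cut k y)^2 * (p * |w y| ^ (p-1)
              + gdot (fun z => Real.log (f z)) (fun z => Real.log (f z)) y) * rho y))
            Filter.atTop := by
          congr 1
          funext k
          rw [ofReal_integral_eq_lintegral_ofReal (hIl k)
            (Filter.Eventually.of_forall (hl0 k))]
      _ ≤ Filter.liminf (fun k : ℕ => ENNReal.ofReal
            (2*(1/(p-1) - μ)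
              * (∫ y : EuclideanSpace ℝ (Fin n), (φ y * cut k y)^2 * rho y)
            + 4 * ∫ y : EuclideanSpace ℝ (Fin n),
                gdot (fun z => φ z * cut k z) (fun z => φ z * cut k z) y * rho y))
            Filter.atTop :=
          Filter.liminf_le_liminf (Filter.Eventually.of_forall fun k =>
            ENNReal.ofReal_le_ofReal (hcore k))
      _ = ENNReal.ofReal (2*(1/(p-1) - μ)
            * (∫ y : EuclideanSpace ℝ (Fin n), (φ y)^2 * rho y)
          + 4 * (∫ y : EuclideanSpace ℝ (Fin n), gdot φ φ y * rho y)) :=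
          (ENNReal.tendsto_ofReal hR).liminf_eq
  have hfinal : (∫ y : EuclideanSpace ℝ (Fin n), (φ y)^2 * (p * |w y| ^ (p-1)
        + gdot (fun z => Real.log (f z)) (fun z => Real.log (f z)) y) * rho y)
      = (∫⁻ y : EuclideanSpace ℝ (Fin n),
          ENNReal.ofReal ((φ y)^2 * (p * |w y| ^ (p-1)
            + gdot (fun z => Real.log (f z)) (fun z => Real.log (f z)) y) * rho y)).toReal :=
    integral_eq_lintegral_of_nonneg_ae (Filter.Eventually.of_forall hL0)
      hLcont.aestronglyMeasurable
  rw [hfinal]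
  calc (∫⁻ y : EuclideanSpace ℝ (Fin n),
        ENNReal.ofReal ((φ y)^2 * (p * |w y| ^ (p-1)
          + gdot (fun z => Real.log (f z)) (fun z => Real.log (f z)) y) * rho y)).toReal
      ≤ (ENNReal.ofReal (2*(1/(p-1) - μ)
          * (∫ y : EuclideanSpace ℝ (Fin n), (φ y)^2 * rho y)
        + 4 * (∫ y : EuclideanSpace ℝ (Fin n), gdot φ φ y * rho y))).toReal :=
        ENNReal.toReal_mono ENNReal.ofReal_ne_top hchain
    _ = _ := ENNReal.toReal_ofReal hR0
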